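/- Let W be a uniformly recurrent infinite word over alphabet A with at most linear recurrence function, let B be a finite alphabet, and let ψ : A* → B* be a non-erasing morphism. Then ψ(W) is uniformly recurrent with at most linear recurrence function. -/

import Mathlib

/-!
Cut `ψ(W)` into the blocks `ψ (W n)`. Every letter of `W` already occurs in the prefix of length
`C₃`, so the blocks have length between `1` and a constant `K`. A factor of `ψ(W)` of length `N`
lies inside the image of a factor of `W` of length `N`, and a factor of `ψ(W)` of length
`K (C₃ + 1) N` contains the image of a factor of `W` of length `C₃ N`. Linear recurrence of `W`
puts the former factor of `W` inside the latter, so `ψ(W)` is linearly recurrent with constant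
`K (C₃ + 1)`, and linear recurrence implies uniform recurrence.
-/

def factorAt {A : Type*} (W : ℕ → A) (i n : ℕ) : List A :=
  (List.range n).map (fun j => W (i + j))

def IsFactorOf {A : Type*} (u : List A) (W : ℕ → A) : Prop :=
  ∃ i, u = factorAt W i u.length

section Factors

variable {A : Type*} (W : ℕ → A)

@[simp]
lemma length_factorAt (i n : ℕ) : (factorAt W i n).length = n := by
  simp [factorAt]

lemma isFactorOf_factorAt (i n : ℕ) : IsFactorOf (factorAt W i n) W :=
  ⟨i, by rw [length_factorAt]⟩

lemma factorAt_add (i m n : ℕ) :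
    factorAt W i (m + n) = factorAt W i m ++ factorAt W (i + m) n := by
  simp [factorAt, List.range_add, add_assoc]

lemma factorAt_infix_factorAt {i j m n : ℕ} (hij : i ≤ j) (hjm : j + m ≤ i + n) :
    factorAt W j m <:+: factorAt W i n := by
  obtain ⟨k, rfl⟩ := Nat.exists_eq_add_of_le hij
  obtain ⟨l, rfl⟩ := Nat.exists_eq_add_of_le (show k + m ≤ n by omega)
  exact ⟨factorAt W i k, factorAt W (i + k + m) l, by
    simp only [factorAt_add, add_assoc, List.append_assoc]⟩

def IsUniformlyRecurrent : Prop :=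
  ∀ v : List A, IsFactorOf v W →
    ∃ m, ∀ u : List A, IsFactorOf u W → u.length = m → v <:+: u

/-- The recurrence function of `W` is at most `N ↦ C * N`. -/
def IsLinearlyRecurrentWith (C : ℕ) : Prop :=
  ∀ N ≥ 1, ∀ u v : List A, IsFactorOf u W → u.length = C * N →
    IsFactorOf v W → v.length = N → v <:+: u

variable {W}

lemma IsLinearlyRecurrentWith.isUniformlyRecurrent {C : ℕ} (hW : IsLinearlyRecurrentWith W C) :
    IsUniformlyRecurrent W := by
  intro v hv
  rcases Nat.eq_zero_or_pos v.length with hv₀ | hv₀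
  · exact ⟨0, fun u _ _ => List.length_eq_zero_iff.mp hv₀ ▸ List.nil_infix⟩
  · exact ⟨C * v.length, fun u hu hul => hW _ hv₀ u v hu hul hv rfl⟩

lemma IsLinearlyRecurrentWith.mem_factorAt_zero {C : ℕ} (hW : IsLinearlyRecurrentWith W C)
    (i : ℕ) : W i ∈ factorAt W 0 C := by
  have hi : IsFactorOf [W i] W := ⟨i, by simp [factorAt]⟩
  exact (hW 1 le_rfl _ _ (isFactorOf_factorAt W 0 C) (by simp) hi rfl).subset
    (List.mem_singleton_self _)

lemma IsLinearlyRecurrentWith.le_sum_map_factorAt_zero {C : ℕ} (hW : IsLinearlyRecurrentWith W C)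
    (f : A → ℕ) (i : ℕ) : f (W i) ≤ ((factorAt W 0 C).map f).sum :=
  List.le_sum_of_mem (List.mem_map_of_mem (hW.mem_factorAt_zero i))

end Factors

section Morphism

variable {A B : Type*} (ψ : A → List B) (W : ℕ → A)

/-- The position in `ψ(W)` at which the block `ψ (W n)` starts. -/
def blockStart (n : ℕ) : ℕ :=
  ((List.range n).map fun i => ψ (W i)).flatten.length

lemma blockStart_zero : blockStart ψ W 0 = 0 := rfl

lemma blockStart_succ (n : ℕ) :
    blockStart ψ W (n + 1) = blockStart ψ W n + (ψ (W n)).length := by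
  simp [blockStart, List.range_succ]

lemma blockStart_add_le_add_mul {K : ℕ} (hK : ∀ i, (ψ (W i)).length ≤ K) (n k : ℕ) :
    blockStart ψ W (n + k) ≤ blockStart ψ W n + K * k := by
  induction k with
  | zero => simp
  | succ k ih =>
    rw [← add_assoc, blockStart_succ, Nat.mul_succ]
    have := hK (n + k)
    omega

variable {ψ}

lemma blockStart_strictMono (hne : ∀ a, ψ a ≠ []) : StrictMono (blockStart ψ W) :=
  strictMono_nat_of_lt_succ fun n => by
    rw [blockStart_succ]
    have := List.length_pos_iff.mpr (hne (W n))
    omega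

lemma exists_blockStart_le_lt (hne : ∀ a, ψ a ≠ []) (p : ℕ) :
    ∃ n, blockStart ψ W n ≤ p ∧ p < blockStart ψ W (n + 1) := by
  -- ℕ has no successor limits, so a strictly monotone map on it is normal.
  have hnormal : Order.IsNormal (blockStart ψ W) :=
    ⟨blockStart_strictMono W hne,
      fun ha => (Order.not_isSuccLimit_of_isSuccArchimedean ha).elim⟩
  simpa using hnormal.exists_map_le_lt_map_succ (x := p) (by simp [blockStart_zero])

variable (ψ) in
/-- `V = ψ(W)`, encoded through prefixes. -/
def IsMorphicImage (V : ℕ → B) : Prop :=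
  ∀ n, factorAt V 0 (blockStart ψ W n) = ((List.range n).map fun i => ψ (W i)).flatten

variable {W} {V : ℕ → B}

lemma IsMorphicImage.factorAt_blockStart (hV : IsMorphicImage ψ W V) (n m : ℕ) :
    factorAt V (blockStart ψ W n) (blockStart ψ W (n + m) - blockStart ψ W n) =
      ((factorAt W n m).map ψ).flatten := by
  have hsplit : ((List.range (n + m)).map fun i => ψ (W i)).flatten =
      ((List.range n).map fun i => ψ (W i)).flatten ++ ((factorAt W n m).map ψ).flatten := by
    simp [List.range_add, factorAt, Function.comp_def]
  have hlen : blockStart ψ W n ≤ blockStart ψ W (n + m) := by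
    simp only [blockStart, hsplit, List.length_append, Nat.le_add_right]
  have hprefix := hV (n + m)
  rw [← Nat.add_sub_cancel' hlen, factorAt_add, zero_add, hV n, hsplit] at hprefix
  exact List.append_cancel_left hprefix

lemma IsMorphicImage.factorAt_infix_map (hV : IsMorphicImage ψ W V) (hne : ∀ a, ψ a ≠ [])
    {n p N : ℕ} (hn : blockStart ψ W n ≤ p) (hp : p < blockStart ψ W (n + 1)) (hN : 1 ≤ N) :
    factorAt V p N <:+: ((factorAt W n N).map ψ).flatten := by
  rw [← hV.factorAt_blockStart n N]
  apply factorAt_infix_factorAt V hn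
  have hgrowth := (blockStart_strictMono W hne).add_le_nat (N - 1) (n + 1)
  rw [show N - 1 + (n + 1) = n + N by omega] at hgrowth
  omega

lemma IsMorphicImage.map_factorAt_infix (hV : IsMorphicImage ψ W V) {K : ℕ}
    (hK : ∀ i, (ψ (W i)).length ≤ K) {n q M L : ℕ} (hn : blockStart ψ W n ≤ q)
    (hq : q < blockStart ψ W (n + 1)) (hL : K * (M + 1) ≤ L) :
    ((factorAt W (n + 1) M).map ψ).flatten <:+: factorAt V q L := by
  rw [← hV.factorAt_blockStart (n + 1) M]
  apply factorAt_infix_factorAt V hq.le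
  have hlast := blockStart_succ ψ W n
  have hspan := blockStart_add_le_add_mul ψ W hK (n + 1) M
  rw [Nat.mul_succ] at hL
  have := hK n
  omega

theorem IsMorphicImage.isLinearlyRecurrentWith (hV : IsMorphicImage ψ W V)
    (hne : ∀ a, ψ a ≠ []) {K C : ℕ} (hK : ∀ i, (ψ (W i)).length ≤ K)
    (hW : IsLinearlyRecurrentWith W C) : IsLinearlyRecurrentWith V (K * (C + 1)) := by
  rintro N hN u v ⟨q, hq⟩ hu ⟨p, hp⟩ hv
  rw [hu] at hq
  rw [hv] at hp
  subst hp hq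
  obtain ⟨n', hn'p, hpn'⟩ := exists_blockStart_le_lt W hne p
  obtain ⟨n, hnq, hqn⟩ := exists_blockStart_le_lt W hne q
  have hlen : K * (C * N + 1) ≤ K * (C + 1) * N := by
    rw [mul_assoc, add_one_mul]
    exact Nat.mul_le_mul_left K (by omega)
  have hWinfix : factorAt W n' N <:+: factorAt W (n + 1) (C * N) :=
    hW N hN _ _ (isFactorOf_factorAt W _ _) (length_factorAt W _ _)
      (isFactorOf_factorAt W _ _) (length_factorAt W _ _)
  exact (hV.factorAt_infix_map hne hn'p hpn' hN).trans
    ((hWinfix.flatMap ψ).trans (hV.map_factorAt_infix hK hnq hqn hlen))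

end Morphism

theorem stmt4_general {A B : Type*} (W : ℕ → A)
    (C₃ : ℕ)
    (hrec : ∀ N ≥ 1, ∀ u v : List A, IsFactorOf u W → u.length = C₃ * N →
      IsFactorOf v W → v.length = N → v <:+: u)
    (ψ : A → List B) (hne : ∀ a, ψ a ≠ [])
    (V : ℕ → B)
    (hV : ∀ n : ℕ, factorAt V 0 (((List.range n).map (fun i => ψ (W i))).flatten.length)
          = ((List.range n).map (fun i => ψ (W i))).flatten) :
    (∀ v : List B, IsFactorOf v V →
      ∃ m, ∀ u : List B, IsFactorOf u V → u.length = m → v <:+: u) ∧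
    ∃ C : ℕ, ∀ N ≥ 1, ∀ u v : List B, IsFactorOf u V → u.length = C * N →
      IsFactorOf v V → v.length = N → v <:+: u := by
  have hW : IsLinearlyRecurrentWith W C₃ := hrec
  have hV' : IsMorphicImage ψ W V := hV
  have hψV := hV'.isLinearlyRecurrentWith hne
    (hW.le_sum_map_factorAt_zero fun a => (ψ a).length) hW
  exact ⟨hψV.isUniformlyRecurrent, _, hψV⟩

/-- The image of a uniformly recurrent word with linear recurrence under a non-erasing
morphism is uniformly recurrent with linear recurrence. -/
theorem stmt4 {A B : Type*} (W : ℕ → A)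
    (hUR : ∀ v : List A, IsFactorOf v W →
      ∃ m, ∀ u : List A, IsFactorOf u W → u.length = m → v <:+: u)
    (C₃ : ℕ)
    (hrec : ∀ N ≥ 1, ∀ u v : List A, IsFactorOf u W → u.length = C₃ * N →
      IsFactorOf v W → v.length = N → v <:+: u)
    (ψ : A → List B) (hne : ∀ a, ψ a ≠ [])
    (V : ℕ → B)
    (hV : ∀ n : ℕ, factorAt V 0 (((List.range n).map (fun i => ψ (W i))).flatten.length)
          = ((List.range n).map (fun i => ψ (W i))).flatten) :
    (∀ v : List B, IsFactorOf v V →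
      ∃ m, ∀ u : List B, IsFactorOf u V → u.length = m → v <:+: u) ∧
    ∃ C : ℕ, ∀ N ≥ 1, ∀ u v : List B, IsFactorOf u V → u.length = C * N →
      IsFactorOf v V → v.length = N → v <:+: u :=
  stmt4_general W C₃ hrec ψ hne V hV
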